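/- For every positive natural number D, all D×D SPD matrices Z₁, Z₂, and every γ ∈ [0,1], the weighted geometric mean Z₁ #_γ Z₂ is a minimizer over all SPD matrices P of the weighted sum of squared AIRM distances (1−γ)·δ(P, Z₁)² + γ·δ(P, Z₂)². In particular, for γ = 1/2 it minimizes P ↦ (1/2)(δ(P, Z₁)² + δ(P, Z₂)²), i.e., it is the Fréchet mean of the two points. -/

import Mathlib

open MeasureTheory

variable {D : ℕ}

instance : MeasurableSpace (Matrix (Fin D) (Fin D) ℝ) :=
  (inferInstance : MeasurableSpace ((Fin D) → (Fin D) → ℝ))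

/-- Apply a real function to the eigenvalues of a symmetric (Hermitian) real matrix
via a spectral decomposition. For non-Hermitian input the map is the identity. -/
noncomputable def matFun (f : ℝ → ℝ) (Z : Matrix (Fin D) (Fin D) ℝ) :
    Matrix (Fin D) (Fin D) ℝ :=
  if h : Z.IsHermitian then
    (h.eigenvectorUnitary : Matrix (Fin D) (Fin D) ℝ) *
      Matrix.diagonal (fun i => f (h.eigenvalues i)) *
      star (h.eigenvectorUnitary : Matrix (Fin D) (Fin D) ℝ)
  else Z

/-- Matrix power `Z ^ s` for SPD `Z`: apply `t ↦ t ^ s` to the eigenvalues. -/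
noncomputable def spdPow (Z : Matrix (Fin D) (Fin D) ℝ) (s : ℝ) :
    Matrix (Fin D) (Fin D) ℝ :=
  matFun (fun t => Real.rpow t s) Z

/-- Matrix logarithm of an SPD matrix: apply `Real.log` to the eigenvalues. -/
noncomputable def spdLog (Z : Matrix (Fin D) (Fin D) ℝ) : Matrix (Fin D) (Fin D) ℝ :=
  matFun Real.log Z

/-- Matrix exponential of a real symmetric matrix: apply `Real.exp` to the eigenvalues. -/
noncomputable def symExp (S : Matrix (Fin D) (Fin D) ℝ) : Matrix (Fin D) (Fin D) ℝ :=
  matFun Real.exp S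

/-- Frobenius norm. -/
noncomputable def frobNorm (A : Matrix (Fin D) (Fin D) ℝ) : ℝ :=
  Real.sqrt (∑ i, ∑ j, (A i j) ^ 2)

/-- A real matrix is SPD if it is positive definite (hence symmetric). -/
def IsSPD (Z : Matrix (Fin D) (Fin D) ℝ) : Prop := Z.PosDef

/-- Affine-invariant Riemannian (AIRM) distance between SPD matrices. -/
noncomputable def airm (Z₁ Z₂ : Matrix (Fin D) (Fin D) ℝ) : ℝ :=
  frobNorm (spdLog (spdPow Z₁ (-(1:ℝ)/2) * Z₂ * spdPow Z₁ (-(1:ℝ)/2)))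

/-- Weighted geometric mean `Z₁ #_γ Z₂`. -/
noncomputable def geoMean (Z₁ Z₂ : Matrix (Fin D) (Fin D) ℝ) (γ : ℝ) :
    Matrix (Fin D) (Fin D) ℝ :=
  spdPow Z₁ ((1:ℝ)/2) *
    spdPow (spdPow Z₁ (-(1:ℝ)/2) * Z₂ * spdPow Z₁ (-(1:ℝ)/2)) γ *
    spdPow Z₁ ((1:ℝ)/2)

/-- `Gstar` is a Fréchet mean of the random SPD matrix `B`. -/
def IsFrechetMean {Ω : Type*} [MeasurableSpace Ω] (μ : Measure Ω)
    (B : Ω → Matrix (Fin D) (Fin D) ℝ) (Gstar : Matrix (Fin D) (Fin D) ℝ) : Prop :=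
  IsSPD Gstar ∧
    ∀ Z : Matrix (Fin D) (Fin D) ℝ, IsSPD Z →
      ∫ ω, airm Gstar (B ω) ^ 2 ∂μ ≤ ∫ ω, airm Z (B ω) ^ 2 ∂μ

/-!
At `G = Z₁ #_γ Z₂` one has `δ(G, Z₁) = γ δ` and `δ(G, Z₂) = (1 - γ) δ`, where `δ = δ(Z₁, Z₂)`,
because `γ ↦ Z₁ #_γ Z₂` is congruent to `γ ↦ N ^ γ` with `N = Z₁^{-1/2} Z₂ Z₁^{-1/2}`. So the
left-hand side is `γ (1 - γ) δ²`, and for any `P`, with `a = δ(P, Z₁)` and `b = δ(P, Z₂)`, the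
triangle inequality `δ ≤ a + b` gives
`γ (1 - γ) δ² ≤ γ (1 - γ) (a + b)² = (1 - γ) a² + γ b² - ((1 - γ) a - γ b)²`.

By congruence invariance the triangle inequality reduces to the case `Z₁ = 1`, where
`δ(1, N) = ‖log N‖_F` and it follows from the triangle inequality of the Frobenius norm and the
exponential metric increasing property `‖log X - log Y‖_F ≤ δ(X, Y)`. Writing `Q`, `R` in their
eigenbases, `‖log Q - log R‖_F² = ∑ᵢⱼ (log qᵢ - log rⱼ)² wᵢⱼ` with `wᵢⱼ` the squared entries of
the orthogonal matrix between the bases; since `(log x - log y)² ≤ x/y + y/x - 2` this is at most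
`tr(Q R⁻¹) + tr(Q⁻¹ R) - 2D = ∑ᵢ (νᵢ + νᵢ⁻¹ - 2) ≤ ε² exp(ε²/2)`, where `νᵢ` are the eigenvalues
of `R^{-1/2} Q R^{-1/2}` and `ε = δ(R, Q)`. Cutting the geodesic from `X` to `Y` into `n` pieces
of length `δ / n` and summing gives `‖log X - log Y‖_F ≤ δ exp(δ² / 4n²)`, and `n → ∞`.
-/

namespace Real

theorem sq_le_two_mul_cosh_sub_one (t : ℝ) : t ^ 2 ≤ 2 * (cosh t - 1) := by
  have h := sum_le_hasSum (Finset.range 2) (fun i _ => by rw [pow_mul]; positivity)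
    (hasSum_cosh t)
  norm_num [Finset.sum_range_succ] at h
  linarith

theorem exp_sub_one_le_mul_exp (x : ℝ) : exp x - 1 ≤ x * exp x := by
  have h := mul_le_mul_of_nonneg_right (add_one_le_exp (-x)) (exp_nonneg x)
  rw [← exp_add, neg_add_cancel, exp_zero] at h
  linarith

theorem two_mul_cosh_sub_one_le (t : ℝ) : 2 * (cosh t - 1) ≤ t ^ 2 * exp (t ^ 2 / 2) := by
  have := exp_sub_one_le_mul_exp (t ^ 2 / 2)
  linarith [cosh_le_exp_half_sq t]

theorem sq_log_sub_log_le {x y : ℝ} (hx : 0 < x) (hy : 0 < y) :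
    (log x - log y) ^ 2 ≤ x * y⁻¹ + x⁻¹ * y - 2 := by
  have h := sq_le_two_mul_cosh_sub_one (log (x / y))
  rw [cosh_log (div_pos hx hy), log_div hx.ne' hy.ne'] at h
  calc (log x - log y) ^ 2 ≤ 2 * ((x / y + (x / y)⁻¹) / 2 - 1) := h
    _ = x * y⁻¹ + x⁻¹ * y - 2 := by field_simp

theorem add_inv_sub_two_le {x : ℝ} (hx : 0 < x) :
    x + x⁻¹ - 2 ≤ log x ^ 2 * exp (log x ^ 2 / 2) := by
  have h := two_mul_cosh_sub_one_le (log x)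
  rw [cosh_log hx] at h
  linarith

end Real

namespace Matrix

attribute [local instance] frobeniusNormedAddCommGroup

variable {n : Type*} [Fintype n]

theorem frobenius_norm_sq_eq_trace (M : Matrix n n ℝ) : ‖M‖ ^ 2 = trace (Mᵀ * M) := by
  rw [frobenius_norm_def, ← Real.sqrt_eq_rpow, Real.sq_sqrt (by positivity), trace,
    Finset.sum_comm]
  simp [mul_apply, sq]

variable [DecidableEq n]

theorem charpoly_mul_mul_of_mul_eq_one {R : Type*} [CommRing R] {P Q : Matrix n n R}
    (hPQ : P * Q = 1) (N : Matrix n n R) : (P * N * Q).charpoly = N.charpoly := by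
  rw [charpoly_mul_comm, ← Matrix.mul_assoc, mul_eq_one_comm.mp hPQ, Matrix.one_mul]

theorem PosDef.mul_mul_of_isHermitian {K : Type*} [Field K] [PartialOrder K] [StarRing K]
    {A C : Matrix n n K} (hA : A.PosDef) (hC : C.IsHermitian) (hCu : IsUnit C) :
    (C * A * C).PosDef := by
  simpa only [hC.eq] using hA.conjTranspose_mul_mul_same (mulVec_injective_iff_isUnit.mpr hCu)

theorem PosDef.spectrum_pos {A : Matrix n n ℝ} (hA : A.PosDef) : ∀ x ∈ spectrum ℝ A, 0 < x := by
  rw [hA.isHermitian.spectrum_real_eq_range_eigenvalues]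
  rintro _ ⟨i, rfl⟩
  exact hA.eigenvalues_pos i

theorem continuousOn_spectrum_real (f : ℝ → ℝ) (A : Matrix n n ℝ) :
    ContinuousOn f (spectrum ℝ A) :=
  A.finite_real_spectrum.continuousOn f

theorem cfc_mul_real (f g : ℝ → ℝ) (A : Matrix n n ℝ) :
    cfc (fun x => f x * g x) A = cfc f A * cfc g A :=
  cfc_mul f g A (continuousOn_spectrum_real f A) (continuousOn_spectrum_real g A)

namespace IsHermitian

variable {A B : Matrix n n ℝ}

theorem cfc_comp_real (hA : A.IsHermitian) (g f : ℝ → ℝ) : cfc (g ∘ f) A = cfc g (cfc f A) :=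
  cfc_comp g f A hA ((A.finite_real_spectrum.image f).continuousOn g)
    (continuousOn_spectrum_real f A)

theorem cfc_eq_mul_diagonal_mul (hA : A.IsHermitian) (f : ℝ → ℝ) :
    cfc f A = (hA.eigenvectorUnitary : Matrix n n ℝ) * diagonal (fun i => f (hA.eigenvalues i)) *
      star (hA.eigenvectorUnitary : Matrix n n ℝ) := by
  rw [hA.cfc_eq, IsHermitian.cfc, Unitary.conjStarAlgAut_apply]
  rfl

theorem posDef_cfc (hA : A.IsHermitian) {f : ℝ → ℝ} (hf : ∀ x ∈ spectrum ℝ A, 0 < f x) :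
    (cfc f A).PosDef := by
  have hF : (cfc f A).IsHermitian := cfc_predicate f A
  refine hF.posDef_iff_eigenvalues_pos.mpr fun i => ?_
  obtain ⟨x, hx, hfx⟩ := (cfc_map_spectrum f A hA (continuousOn_spectrum_real f A)).subset
    (hF.eigenvalues_mem_spectrum_real i)
  exact hfx ▸ hf x hx

theorem trace_cfc (hA : A.IsHermitian) (f : ℝ → ℝ) :
    trace (cfc f A) = ∑ i, f (hA.eigenvalues i) := by
  rw [hA.cfc_eq_mul_diagonal_mul, trace_mul_cycle,
    Unitary.star_mul_self_of_mem hA.eigenvectorUnitary.2, one_mul, trace_diagonal]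

theorem trace_cfc_mul_cfc (hA : A.IsHermitian) (hB : B.IsHermitian) (f g : ℝ → ℝ) :
    trace (cfc f A * cfc g B) = ∑ i, ∑ j, f (hA.eigenvalues i) * g (hB.eigenvalues j) *
      ((star (hA.eigenvectorUnitary : Matrix n n ℝ) * hB.eigenvectorUnitary) i j) ^ 2 := by
  set U : Matrix n n ℝ := (hA.eigenvectorUnitary : Matrix n n ℝ)
  set V : Matrix n n ℝ := (hB.eigenvectorUnitary : Matrix n n ℝ)
  rw [hA.cfc_eq_mul_diagonal_mul, hB.cfc_eq_mul_diagonal_mul]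
  calc trace (U * diagonal _ * star U * (V * diagonal _ * star V))
      = trace (diagonal (fun i => f (hA.eigenvalues i)) * (star U * V) *
          diagonal (fun j => g (hB.eigenvalues j)) * (star U * V)ᵀ) := by
        simp only [transpose_mul, star_eq_conjTranspose, conjTranspose_eq_transpose_of_trivial,
          transpose_transpose, Matrix.mul_assoc]
        rw [trace_mul_comm U]
        simp only [Matrix.mul_assoc]
    _ = _ := by
        simp only [trace, diag, mul_apply, diagonal_apply, transpose_apply, star_apply,
          star_trivial, ite_mul, zero_mul, mul_ite, mul_zero, Finset.sum_ite_eq,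
          Finset.sum_ite_eq', Finset.mem_univ, ↓reduceIte]
        exact Finset.sum_congr rfl fun i _ => Finset.sum_congr rfl fun j _ => by ring

theorem norm_cfc_sq (hA : A.IsHermitian) (f : ℝ → ℝ) :
    ‖cfc f A‖ ^ 2 = ∑ i, f (hA.eigenvalues i) ^ 2 := by
  have hF : (cfc f A)ᵀ = cfc f A := (cfc_predicate f A : (cfc f A).IsHermitian)
  rw [frobenius_norm_sq_eq_trace, hF, ← cfc_mul_real, hA.trace_cfc]
  simp only [sq]

theorem norm_cfc_eq_of_charpoly_eq (hA : A.IsHermitian) (hB : B.IsHermitian)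
    (h : A.charpoly = B.charpoly) (f : ℝ → ℝ) : ‖cfc f A‖ = ‖cfc f B‖ := by
  rw [← sq_eq_sq₀ (norm_nonneg _) (norm_nonneg _), hA.norm_cfc_sq, hB.norm_cfc_sq,
    (hA.eigenvalues_eq_eigenvalues_iff hB).mpr h]

theorem norm_cfc_sub_cfc_sq (hA : A.IsHermitian) (hB : B.IsHermitian) (f g : ℝ → ℝ) :
    ‖cfc f A - cfc g B‖ ^ 2 = ∑ i, ∑ j, (f (hA.eigenvalues i) - g (hB.eigenvalues j)) ^ 2 *
      ((star (hA.eigenvectorUnitary : Matrix n n ℝ) * hB.eigenvectorUnitary) i j) ^ 2 := by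
  have hFG : (cfc f A - cfc g B)ᵀ = cfc f A - cfc g B :=
    IsHermitian.sub (cfc_predicate f A) (cfc_predicate g B)
  have hFF : cfc f A * cfc f A = cfc (fun x => f x ^ 2) A * cfc (fun _ : ℝ => (1 : ℝ)) B := by
    rw [cfc_const_one ℝ B, mul_one, ← cfc_mul_real]
    simp only [sq]
  have hGG : cfc g B * cfc g B = cfc (fun _ : ℝ => (1 : ℝ)) A * cfc (fun x => g x ^ 2) B := by
    rw [cfc_const_one ℝ A, one_mul, ← cfc_mul_real]
    simp only [sq]
  rw [frobenius_norm_sq_eq_trace, hFG, sub_mul, mul_sub, mul_sub, trace_sub, trace_sub,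
    trace_sub, trace_mul_comm (cfc g B), hFF, hGG, hA.trace_cfc_mul_cfc hB,
    hA.trace_cfc_mul_cfc hB, hA.trace_cfc_mul_cfc hB]
  simp only [← Finset.sum_sub_distrib]
  exact Finset.sum_congr rfl fun i _ => Finset.sum_congr rfl fun j _ => by ring

end IsHermitian

end Matrix

open Matrix

section SpectralCalculus

variable {Z : Matrix (Fin D) (Fin D) ℝ}

theorem matFun_eq_cfc (hZ : Z.IsHermitian) (f : ℝ → ℝ) : matFun f Z = cfc f Z := by
  rw [matFun, dif_pos hZ, hZ.cfc_eq_mul_diagonal_mul]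

theorem spdPow_eq_cfc (hZ : Z.IsHermitian) (s : ℝ) : spdPow Z s = cfc (fun t : ℝ => t ^ s) Z :=
  matFun_eq_cfc hZ _

theorem spdLog_eq_cfc (hZ : Z.IsHermitian) : spdLog Z = cfc Real.log Z :=
  matFun_eq_cfc hZ _

theorem posDef_spdPow (hZ : Z.PosDef) (s : ℝ) : (spdPow Z s).PosDef := by
  rw [spdPow_eq_cfc hZ.isHermitian]
  exact hZ.isHermitian.posDef_cfc fun x hx => Real.rpow_pos_of_pos (hZ.spectrum_pos x hx) s

theorem spdPow_mul_spdPow (hZ : Z.PosDef) (s t : ℝ) :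
    spdPow Z s * spdPow Z t = spdPow Z (s + t) := by
  simp only [spdPow_eq_cfc hZ.isHermitian]
  rw [← cfc_mul_real]
  exact cfc_congr fun x hx => (Real.rpow_add (hZ.spectrum_pos x hx) s t).symm

theorem spdPow_zero (hZ : Z.PosDef) : spdPow Z 0 = 1 := by
  simp only [spdPow_eq_cfc hZ.isHermitian, Real.rpow_zero]
  exact cfc_const_one ℝ Z hZ.isHermitian

theorem spdPow_one (hZ : Z.PosDef) : spdPow Z 1 = Z := by
  simp only [spdPow_eq_cfc hZ.isHermitian, Real.rpow_one]
  exact cfc_id' ℝ Z hZ.isHermitian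

theorem spdPow_spdPow (hZ : Z.PosDef) (s t : ℝ) :
    spdPow (spdPow Z s) t = spdPow Z (s * t) := by
  rw [spdPow_eq_cfc (posDef_spdPow hZ s).isHermitian, spdPow_eq_cfc hZ.isHermitian,
    spdPow_eq_cfc hZ.isHermitian, ← hZ.isHermitian.cfc_comp_real]
  exact cfc_congr fun x hx => (Real.rpow_mul (hZ.spectrum_pos x hx).le s t).symm

theorem spdLog_spdPow (hZ : Z.PosDef) (s : ℝ) : spdLog (spdPow Z s) = s • spdLog Z := by
  rw [spdLog_eq_cfc (posDef_spdPow hZ s).isHermitian, spdPow_eq_cfc hZ.isHermitian,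
    spdLog_eq_cfc hZ.isHermitian, ← hZ.isHermitian.cfc_comp_real,
    ← cfc_const_mul _ _ Z (continuousOn_spectrum_real _ Z)]
  exact cfc_congr fun x hx => Real.log_rpow (hZ.spectrum_pos x hx) s

theorem inv_spdPow (hZ : Z.PosDef) (s : ℝ) : (spdPow Z s)⁻¹ = spdPow Z (-s) :=
  inv_eq_left_inv (by rw [spdPow_mul_spdPow hZ, neg_add_cancel, spdPow_zero hZ])

theorem spdPow_neg_one (hZ : Z.PosDef) : spdPow Z (-1) = Z⁻¹ := by
  rw [← inv_spdPow hZ, spdPow_one hZ]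

end SpectralCalculus

noncomputable def whiten (X Y : Matrix (Fin D) (Fin D) ℝ) : Matrix (Fin D) (Fin D) ℝ :=
  spdPow X (-(1:ℝ)/2) * Y * spdPow X (-(1:ℝ)/2)

section AIRM

attribute [local instance] frobeniusNormedAddCommGroup frobeniusNormedSpace

variable {C M P Q R X Y Z : Matrix (Fin D) (Fin D) ℝ}

theorem airm_eq_norm (X Y : Matrix (Fin D) (Fin D) ℝ) : airm X Y = ‖spdLog (whiten X Y)‖ := by
  simp [airm, whiten, frobNorm, frobenius_norm_def, Real.sqrt_eq_rpow]

theorem airm_nonneg (X Y : Matrix (Fin D) (Fin D) ℝ) : 0 ≤ airm X Y :=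
  Real.sqrt_nonneg _

theorem geoMean_eq (X Y : Matrix (Fin D) (Fin D) ℝ) (γ : ℝ) :
    geoMean X Y γ = spdPow X (1/2) * spdPow (whiten X Y) γ * spdPow X (1/2) :=
  rfl

theorem posDef_whiten (hX : X.PosDef) (hY : Y.PosDef) : (whiten X Y).PosDef :=
  hY.mul_mul_of_isHermitian (posDef_spdPow hX _).isHermitian (posDef_spdPow hX _).isUnit

theorem whiten_self (hX : X.PosDef) : whiten X X = 1 := by
  rw [whiten, ← spdPow_one hX, spdPow_spdPow hX, spdPow_mul_spdPow hX, spdPow_mul_spdPow hX]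
  norm_num [spdPow_zero hX]

theorem whiten_one_left (Y : Matrix (Fin D) (Fin D) ℝ) : whiten 1 Y = Y := by
  rw [whiten, ← spdPow_zero PosDef.one, spdPow_spdPow PosDef.one, zero_mul,
    spdPow_zero PosDef.one, Matrix.one_mul, Matrix.mul_one]

theorem whiten_spdPow_spdPow (hM : M.PosDef) (s t : ℝ) :
    whiten (spdPow M s) (spdPow M t) = spdPow M (t - s) := by
  rw [whiten, spdPow_spdPow hM, spdPow_mul_spdPow hM, spdPow_mul_spdPow hM]
  ring_nf

theorem spdPow_half_mul_whiten_mul (hX : X.PosDef) (Y : Matrix (Fin D) (Fin D) ℝ) :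
    spdPow X (1/2) * whiten X Y * spdPow X (1/2) = Y := by
  simp only [whiten, ← Matrix.mul_assoc, spdPow_mul_spdPow hX]
  simp only [Matrix.mul_assoc, spdPow_mul_spdPow hX]
  norm_num [spdPow_zero hX]

theorem whiten_geoMean (hX : X.PosDef) (Y : Matrix (Fin D) (Fin D) ℝ) (γ : ℝ) :
    whiten X (geoMean X Y γ) = spdPow (whiten X Y) γ := by
  rw [whiten, geoMean_eq]
  simp only [← Matrix.mul_assoc, spdPow_mul_spdPow hX]
  simp only [Matrix.mul_assoc, spdPow_mul_spdPow hX]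
  norm_num [spdPow_zero hX]

theorem airm_one_left (Y : Matrix (Fin D) (Fin D) ℝ) : airm 1 Y = ‖spdLog Y‖ := by
  rw [airm_eq_norm, whiten_one_left]

theorem airm_one_right (hP : P.PosDef) : airm P 1 = ‖spdLog P‖ := by
  rw [airm_eq_norm, whiten, Matrix.mul_one, spdPow_mul_spdPow hP, spdLog_spdPow hP, norm_smul]
  norm_num

theorem airm_spdPow_spdPow (hM : M.PosDef) (s t : ℝ) :
    airm (spdPow M s) (spdPow M t) = |t - s| * ‖spdLog M‖ := by
  rw [airm_eq_norm, whiten_spdPow_spdPow hM, spdLog_spdPow hM, norm_smul, Real.norm_eq_abs]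

theorem airm_mul_mul (hX : X.PosDef) (hY : Y.PosDef) (hC : C.PosDef) :
    airm (C * X * C) (C * Y * C) = airm X Y := by
  have hCXC : (C * X * C).PosDef := hX.mul_mul_of_isHermitian hC.isHermitian hC.isUnit
  have hCYC : (C * Y * C).PosDef := hY.mul_mul_of_isHermitian hC.isHermitian hC.isUnit
  set S := spdPow (C * X * C) (-(1:ℝ)/2)
  set H := spdPow X (1/2)
  have hPQ : (S * C * H) * (H * C * S) = 1 := by
    have hHH : H * H = X := by
      rw [spdPow_mul_spdPow hX]
      norm_num [spdPow_one hX]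
    calc S * C * H * (H * C * S) = S * (C * (H * H) * C) * S := by simp only [Matrix.mul_assoc]
      _ = 1 := by rw [hHH]; exact whiten_self hCXC
  have hN : whiten (C * X * C) (C * Y * C) = (S * C * H) * whiten X Y * (H * C * S) :=
    calc whiten (C * X * C) (C * Y * C) = S * (C * Y * C) * S := rfl
      _ = S * (C * (H * whiten X Y * H) * C) * S := by rw [spdPow_half_mul_whiten_mul hX]
      _ = _ := by simp only [Matrix.mul_assoc]
  have hchar : (whiten (C * X * C) (C * Y * C)).charpoly = (whiten X Y).charpoly := by
    rw [hN, charpoly_mul_mul_of_mul_eq_one hPQ]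
  rw [airm_eq_norm, airm_eq_norm, spdLog_eq_cfc (posDef_whiten hCXC hCYC).isHermitian,
    spdLog_eq_cfc (posDef_whiten hX hY).isHermitian]
  exact (posDef_whiten hCXC hCYC).isHermitian.norm_cfc_eq_of_charpoly_eq
    (posDef_whiten hX hY).isHermitian hchar _

theorem airm_whiten_whiten (hZ : Z.PosDef) (hX : X.PosDef) (hY : Y.PosDef) :
    airm (whiten Z X) (whiten Z Y) = airm X Y :=
  airm_mul_mul hX hY (posDef_spdPow hZ _)

theorem posDef_geoMean (hX : X.PosDef) (hY : Y.PosDef) (γ : ℝ) : (geoMean X Y γ).PosDef :=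
  (posDef_spdPow (posDef_whiten hX hY) γ).mul_mul_of_isHermitian
    (posDef_spdPow hX _).isHermitian (posDef_spdPow hX _).isUnit

theorem geoMean_zero (hX : X.PosDef) (hY : Y.PosDef) : geoMean X Y 0 = X := by
  rw [geoMean_eq, spdPow_zero (posDef_whiten hX hY), Matrix.mul_one, spdPow_mul_spdPow hX]
  norm_num [spdPow_one hX]

theorem geoMean_one (hX : X.PosDef) (hY : Y.PosDef) : geoMean X Y 1 = Y := by
  rw [geoMean_eq, spdPow_one (posDef_whiten hX hY), spdPow_half_mul_whiten_mul hX]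

theorem airm_geoMean_geoMean (hX : X.PosDef) (hY : Y.PosDef) (a b : ℝ) :
    airm (geoMean X Y a) (geoMean X Y b) = |b - a| * airm X Y := by
  rw [← airm_whiten_whiten hX (posDef_geoMean hX hY a) (posDef_geoMean hX hY b),
    whiten_geoMean hX, whiten_geoMean hX, airm_spdPow_spdPow (posDef_whiten hX hY),
    airm_eq_norm]

theorem airm_geoMean_left (hX : X.PosDef) (hY : Y.PosDef) (γ : ℝ) :
    airm (geoMean X Y γ) X = |γ| * airm X Y := by
  have h := airm_geoMean_geoMean hX hY γ 0
  rwa [geoMean_zero hX hY, zero_sub, abs_neg] at h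

theorem airm_geoMean_right (hX : X.PosDef) (hY : Y.PosDef) (γ : ℝ) :
    airm (geoMean X Y γ) Y = |1 - γ| * airm X Y := by
  have h := airm_geoMean_geoMean hX hY γ 1
  rwa [geoMean_one hX hY] at h

theorem norm_spdLog_sub_spdLog_sq_le (hQ : Q.PosDef) (hR : R.PosDef) :
    ‖spdLog Q - spdLog R‖ ^ 2 ≤ trace (Q * R⁻¹) + trace (Q⁻¹ * R) - 2 * D := by
  have hQ' := hQ.isHermitian
  have hR' := hR.isHermitian
  have hT₁ : trace (Q * R⁻¹) =
      trace (cfc (fun x : ℝ => x) Q * cfc (fun x : ℝ => x ^ (-1:ℝ)) R) := by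
    rw [cfc_id' ℝ Q hQ'.isSelfAdjoint, ← spdPow_eq_cfc hR', spdPow_neg_one hR]
  have hT₂ : trace (Q⁻¹ * R) =
      trace (cfc (fun x : ℝ => x ^ (-1:ℝ)) Q * cfc (fun x : ℝ => x) R) := by
    rw [cfc_id' ℝ R hR'.isSelfAdjoint, ← spdPow_eq_cfc hQ', spdPow_neg_one hQ]
  -- so that `D` also expands over the weights `((Uᴴ V) i j) ^ 2` of `trace_cfc_mul_cfc`
  have hD : (D : ℝ) = trace (cfc (fun _ => (1:ℝ)) Q * cfc (fun _ => (1:ℝ)) R) := by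
    rw [cfc_const_one ℝ Q hQ'.isSelfAdjoint, cfc_const_one ℝ R hR'.isSelfAdjoint,
      Matrix.one_mul, trace_one, Fintype.card_fin]
  rw [hT₁, hT₂, hD, spdLog_eq_cfc hQ', spdLog_eq_cfc hR', hQ'.norm_cfc_sub_cfc_sq hR',
    hQ'.trace_cfc_mul_cfc hR', hQ'.trace_cfc_mul_cfc hR', hQ'.trace_cfc_mul_cfc hR']
  simp only [Finset.mul_sum, ← Finset.sum_add_distrib, ← Finset.sum_sub_distrib,
    Real.rpow_neg_one]
  refine Finset.sum_le_sum fun i _ => Finset.sum_le_sum fun j _ => ?_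
  have h := mul_le_mul_of_nonneg_right
    (Real.sq_log_sub_log_le (hQ.eigenvalues_pos i) (hR.eigenvalues_pos j))
    (sq_nonneg ((star (hQ'.eigenvectorUnitary : Matrix (Fin D) (Fin D) ℝ) *
      hR'.eigenvectorUnitary) i j))
  linarith

theorem trace_mul_inv_eq_sum_eigenvalues (hQ : Q.PosDef) (hR : R.PosDef) :
    trace (Q * R⁻¹) = ∑ i, (posDef_whiten hR hQ).isHermitian.eigenvalues i := by
  have h := (posDef_whiten hR hQ).isHermitian.trace_eq_sum_eigenvalues
  simp only [RCLike.ofReal_real_eq_id, id] at h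
  rw [← h, whiten, trace_mul_cycle, spdPow_mul_spdPow hR, trace_mul_comm]
  norm_num [spdPow_neg_one hR]

theorem trace_inv_mul_eq_sum_eigenvalues (hQ : Q.PosDef) (hR : R.PosDef) :
    trace (Q⁻¹ * R) = ∑ i, ((posDef_whiten hR hQ).isHermitian.eigenvalues i)⁻¹ := by
  have hN := posDef_whiten hR hQ
  have h := hN.isHermitian.trace_cfc (fun x => x ^ (-1:ℝ))
  rw [← spdPow_eq_cfc hN.isHermitian, spdPow_neg_one hN] at h
  simp only [Real.rpow_neg_one] at h
  rw [← h, whiten, Matrix.mul_inv_rev, Matrix.mul_inv_rev, inv_spdPow hR,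
    trace_mul_comm (spdPow R _), Matrix.mul_assoc, spdPow_mul_spdPow hR]
  norm_num [spdPow_one hR]

theorem norm_spdLog_sub_spdLog_le (hQ : Q.PosDef) (hR : R.PosDef) :
    ‖spdLog Q - spdLog R‖ ≤ airm R Q * Real.exp (airm R Q ^ 2 / 4) := by
  have hN := posDef_whiten hR hQ
  have hρ : airm R Q ^ 2 = ∑ i, Real.log (hN.isHermitian.eigenvalues i) ^ 2 := by
    rw [airm_eq_norm, spdLog_eq_cfc hN.isHermitian, hN.isHermitian.norm_cfc_sq]
  set ν := hN.isHermitian.eigenvalues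
  set ρ := airm R Q
  have hterm (i : Fin D) : ν i + (ν i)⁻¹ - 2 ≤ Real.log (ν i) ^ 2 * Real.exp (ρ ^ 2 / 2) := by
    have hle : Real.log (ν i) ^ 2 ≤ ρ ^ 2 :=
      hρ ▸ Finset.single_le_sum (fun j _ => sq_nonneg (Real.log (ν j))) (Finset.mem_univ i)
    calc ν i + (ν i)⁻¹ - 2 ≤ Real.log (ν i) ^ 2 * Real.exp (Real.log (ν i) ^ 2 / 2) :=
          Real.add_inv_sub_two_le (hN.eigenvalues_pos i)
      _ ≤ Real.log (ν i) ^ 2 * Real.exp (ρ ^ 2 / 2) := by gcongr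
  have hsq : ‖spdLog Q - spdLog R‖ ^ 2 ≤ (ρ * Real.exp (ρ ^ 2 / 4)) ^ 2 :=
    calc ‖spdLog Q - spdLog R‖ ^ 2 ≤ trace (Q * R⁻¹) + trace (Q⁻¹ * R) - 2 * D :=
          norm_spdLog_sub_spdLog_sq_le hQ hR
      _ = ∑ i, (ν i + (ν i)⁻¹ - 2) := by
          rw [trace_mul_inv_eq_sum_eigenvalues hQ hR, trace_inv_mul_eq_sum_eigenvalues hQ hR,
            Finset.sum_sub_distrib, Finset.sum_add_distrib, Finset.sum_const, Finset.card_univ,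
            Fintype.card_fin, nsmul_eq_mul]
          ring
      _ ≤ ∑ i, Real.log (ν i) ^ 2 * Real.exp (ρ ^ 2 / 2) := Finset.sum_le_sum fun i _ => hterm i
      _ = (ρ * Real.exp (ρ ^ 2 / 4)) ^ 2 := by
          rw [← Finset.sum_mul, ← hρ, mul_pow, sq (Real.exp _), ← Real.exp_add]
          ring_nf
  exact (pow_le_pow_iff_left₀ (norm_nonneg _)
    (mul_nonneg (airm_nonneg R Q) (Real.exp_nonneg _)) two_ne_zero).mp hsq

theorem norm_spdLog_sub_spdLog_le_airm_mul_exp (hX : X.PosDef) (hY : Y.PosDef) (n : ℕ) :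
    ‖spdLog X - spdLog Y‖ ≤ airm X Y * Real.exp ((airm X Y / (n + 1)) ^ 2 / 4) := by
  set ε := airm X Y / (n + 1)
  set f : ℕ → Matrix (Fin D) (Fin D) ℝ := fun k => spdLog (geoMean X Y (k / (n + 1)))
  have hstep (k : ℕ) : dist (f k) (f (k + 1)) ≤ ε * Real.exp (ε ^ 2 / 4) := by
    have hε : airm (geoMean X Y (k / (n + 1))) (geoMean X Y ((k + 1 : ℕ) / (n + 1))) = ε := by
      rw [airm_geoMean_geoMean hX hY, Nat.cast_succ, ← sub_div, add_sub_cancel_left,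
        abs_of_pos (by positivity), one_div_mul_eq_div]
    rw [dist_eq_norm, norm_sub_rev, ← hε]
    exact norm_spdLog_sub_spdLog_le (posDef_geoMean hX hY _) (posDef_geoMean hX hY _)
  calc ‖spdLog X - spdLog Y‖ = dist (f 0) (f (n + 1)) := by
        simp [f, dist_eq_norm, geoMean_zero hX hY, geoMean_one hX hY,
          div_self (n.cast_add_one_ne_zero : (n : ℝ) + 1 ≠ 0)]
    _ ≤ ∑ k ∈ Finset.range (n + 1), dist (f k) (f (k + 1)) := dist_le_range_sum_dist f (n + 1)
    _ ≤ ∑ k ∈ Finset.range (n + 1), ε * Real.exp (ε ^ 2 / 4) :=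
        Finset.sum_le_sum fun k _ => hstep k
    _ = airm X Y * Real.exp (ε ^ 2 / 4) := by
        rw [Finset.sum_const, Finset.card_range, nsmul_eq_mul, Nat.cast_succ]
        simp only [ε]
        field_simp

theorem norm_spdLog_sub_spdLog_le_airm (hX : X.PosDef) (hY : Y.PosDef) :
    ‖spdLog X - spdLog Y‖ ≤ airm X Y := by
  set ρ := airm X Y
  have h0 : Filter.Tendsto (fun n : ℕ => ρ / ((n : ℝ) + 1)) Filter.atTop (nhds 0) := by
    simpa [div_eq_mul_inv] using tendsto_one_div_add_atTop_nhds_zero_nat.const_mul ρ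
  have hc : Continuous fun t : ℝ => ρ * Real.exp (t ^ 2 / 4) := by fun_prop
  have hlim : Filter.Tendsto (fun n : ℕ => ρ * Real.exp ((ρ / (n + 1)) ^ 2 / 4))
      Filter.atTop (nhds ρ) := by
    simpa [Function.comp_def] using (hc.tendsto 0).comp h0
  exact ge_of_tendsto' hlim (norm_spdLog_sub_spdLog_le_airm_mul_exp hX hY)

theorem airm_le_airm_add_airm (hX : X.PosDef) (hY : Y.PosDef) (hP : P.PosDef) :
    airm X Y ≤ airm P X + airm P Y := by
  rw [← airm_whiten_whiten hX hX hY, ← airm_whiten_whiten hX hP hX,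
    ← airm_whiten_whiten hX hP hY, whiten_self hX, airm_one_left,
    airm_one_right (posDef_whiten hX hP)]
  calc ‖spdLog (whiten X Y)‖
      ≤ ‖spdLog (whiten X P)‖ + ‖spdLog (whiten X P) - spdLog (whiten X Y)‖ :=
        norm_le_norm_add_norm_sub _ _
    _ ≤ ‖spdLog (whiten X P)‖ + airm (whiten X P) (whiten X Y) := by
        gcongr
        exact norm_spdLog_sub_spdLog_le_airm (posDef_whiten hX hP) (posDef_whiten hX hY)

end AIRM

theorem weighted_sq_airm_geoMean_le {X Y P : Matrix (Fin D) (Fin D) ℝ} (hX : X.PosDef)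
    (hY : Y.PosDef) (hP : P.PosDef) {γ : ℝ} (hγ : γ ∈ Set.Icc (0:ℝ) 1) :
    (1 - γ) * airm (geoMean X Y γ) X ^ 2 + γ * airm (geoMean X Y γ) Y ^ 2 ≤
      (1 - γ) * airm P X ^ 2 + γ * airm P Y ^ 2 := by
  obtain ⟨h0, h1⟩ := hγ
  rw [airm_geoMean_left hX hY, airm_geoMean_right hX hY, abs_of_nonneg h0,
    abs_of_nonneg (sub_nonneg.mpr h1)]
  have htri := pow_le_pow_left₀ (airm_nonneg X Y) (airm_le_airm_add_airm hX hY hP) 2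
  nlinarith [mul_le_mul_of_nonneg_left htri (mul_nonneg h0 (sub_nonneg.mpr h1)),
    sq_nonneg ((1 - γ) * airm P X - γ * airm P Y)]

theorem geoMean_minimizes_weighted_sq_dist_general
    (D : ℕ) (Z₁ Z₂ : Matrix (Fin D) (Fin D) ℝ)
    (hZ₁ : IsSPD Z₁) (hZ₂ : IsSPD Z₂) (γ : ℝ) (hγ : γ ∈ Set.Icc (0:ℝ) 1) :
    (∀ P : Matrix (Fin D) (Fin D) ℝ, IsSPD P →
        (1 - γ) * airm (geoMean Z₁ Z₂ γ) Z₁ ^ 2 + γ * airm (geoMean Z₁ Z₂ γ) Z₂ ^ 2 ≤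
          (1 - γ) * airm P Z₁ ^ 2 + γ * airm P Z₂ ^ 2) ∧
      (∀ P : Matrix (Fin D) (Fin D) ℝ, IsSPD P →
        (1 / 2) * (airm (geoMean Z₁ Z₂ (1 / 2)) Z₁ ^ 2 +
            airm (geoMean Z₁ Z₂ (1 / 2)) Z₂ ^ 2) ≤
          (1 / 2) * (airm P Z₁ ^ 2 + airm P Z₂ ^ 2)) := by
  refine ⟨fun P hP => weighted_sq_airm_geoMean_le hZ₁ hZ₂ hP hγ, fun P hP => ?_⟩
  have h := weighted_sq_airm_geoMean_le hZ₁ hZ₂ hP (γ := 1 / 2) (by norm_num)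
  norm_num at h ⊢
  linarith

/-- The weighted geometric mean minimizes the weighted sum of squared AIRM distances;
in particular, for γ = 1/2 it is the Fréchet mean of the two points. -/
theorem geoMean_minimizes_weighted_sq_dist
    (D : ℕ) (hD : 0 < D) (Z₁ Z₂ : Matrix (Fin D) (Fin D) ℝ)
    (hZ₁ : IsSPD Z₁) (hZ₂ : IsSPD Z₂) (γ : ℝ) (hγ : γ ∈ Set.Icc (0:ℝ) 1) :
    (∀ P : Matrix (Fin D) (Fin D) ℝ, IsSPD P →
        (1 - γ) * airm (geoMean Z₁ Z₂ γ) Z₁ ^ 2 + γ * airm (geoMean Z₁ Z₂ γ) Z₂ ^ 2 ≤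
          (1 - γ) * airm P Z₁ ^ 2 + γ * airm P Z₂ ^ 2) ∧
      (∀ P : Matrix (Fin D) (Fin D) ℝ, IsSPD P →
        (1 / 2) * (airm (geoMean Z₁ Z₂ (1 / 2)) Z₁ ^ 2 +
            airm (geoMean Z₁ Z₂ (1 / 2)) Z₂ ^ 2) ≤
          (1 / 2) * (airm P Z₁ ^ 2 + airm P Z₂ ^ 2)) :=
  geoMean_minimizes_weighted_sq_dist_general D Z₁ Z₂ hZ₁ hZ₂ γ hγ
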